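/- Suppose 0 < ℋ^s_w(K) < ∞, where s = n·ln(#𝒟)/ln q. Then two finite words 𝐢, 𝐣 over {1,…,N} are incomparable if and only if ℋ^s_w(K_𝐢 ∩ K_𝐣) = 0. -/

import Mathlib

open MeasureTheory Set ENNReal NNReal

noncomputable section

/-- Points of `ℝⁿ` with the Euclidean norm. -/
abbrev Pt (n : ℕ) := EuclideanSpace ℝ (Fin n)

/-- The action of an `n × n` real matrix on Euclidean space. -/
def mapp {n : ℕ} (A : Matrix (Fin n) (Fin n) ℝ) (x : Pt n) : Pt n :=
  Matrix.toEuclideanLin A x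

/-- A real matrix is expanding if all of its (complex) eigenvalues have modulus `> 1`. -/
def IsExpandingMatrix {n : ℕ} (A : Matrix (Fin n) (Fin n) ℝ) : Prop :=
  ∀ μ ∈ spectrum ℂ (A.map (fun a => (a : ℂ))), 1 < ‖μ‖

/-- The diameter of a set with respect to the pseudo norm `w`. -/
def pdiam {n : ℕ} (w : Pt n → ℝ) (E : Set (Pt n)) : ℝ≥0∞ :=
  ⨆ (x ∈ E) (y ∈ E), ENNReal.ofReal (w (x - y))

/-- The `δ`-approximation of the `s`-dimensional pseudo Hausdorff measure. -/
def preHw {n : ℕ} (w : Pt n → ℝ) (s δ : ℝ) (E : Set (Pt n)) : ℝ≥0∞ :=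
  ⨅ (U : ℕ → Set (Pt n)) (_ : E ⊆ ⋃ i, U i)
    (_ : ∀ i, pdiam w (U i) ≤ ENNReal.ofReal δ), ∑' i, pdiam w (U i) ^ s

/-- The `s`-dimensional pseudo Hausdorff measure w.r.t. the pseudo norm `w`. -/
def Hw {n : ℕ} (w : Pt n → ℝ) (s : ℝ) (E : Set (Pt n)) : ℝ≥0∞ :=
  ⨆ (δ : ℝ) (_ : 0 < δ), preHw w s δ E

/-- Carathéodory measurability with respect to the outer measure `Hw w s`. -/
def HwMeasurable {n : ℕ} (w : Pt n → ℝ) (s : ℝ) (E : Set (Pt n)) : Prop :=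
  ∀ T : Set (Pt n), Hw w s T = Hw w s (T ∩ E) + Hw w s (T \ E)

/-- A pseudo norm associated with the expanding matrix `A`. -/
structure IsPseudoNorm {n : ℕ} (A : Matrix (Fin n) (Fin n) ℝ) (w : Pt n → ℝ) : Prop where
  continuous : Continuous w
  nonneg : ∀ x, 0 ≤ w x
  neg : ∀ x, w (-x) = w x
  eq_zero_iff : ∀ x, w x = 0 ↔ x = 0
  scaling : ∀ x, w (mapp A x) = |A.det| ^ ((1 : ℝ) / n) * w x
  quasi_triangle : ∃ β > (0 : ℝ), ∀ x y, w (x + y) ≤ β * max (w x) (w y)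
  comparable : ∃ C > (0 : ℝ), ∃ α₁ > (0 : ℝ), ∃ α₂ > (0 : ℝ),
    (∀ x : Pt n, 1 < ‖x‖ → C⁻¹ * ‖x‖ ^ α₁ ≤ w x ∧ w x ≤ C * ‖x‖ ^ α₂) ∧
    (∀ x : Pt n, ‖x‖ ≤ 1 → C⁻¹ * ‖x‖ ^ α₂ ≤ w x ∧ w x ≤ C * ‖x‖ ^ α₁)

/-- The map `f_d(x) = A⁻¹(x + d)` of the self-affine IFS. -/
def fIFS {n : ℕ} (A : Matrix (Fin n) (Fin n) ℝ) (d : Pt n) (x : Pt n) : Pt n :=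
  mapp A⁻¹ (x + d)

/-- The open set condition for the IFS `{f_d}_{d ∈ D}`. -/
def OSC {n : ℕ} (A : Matrix (Fin n) (Fin n) ℝ) (D : Finset (Pt n)) : Prop :=
  ∃ V : Set (Pt n), V.Nonempty ∧ IsOpen V ∧ Bornology.IsBounded V ∧
    (⋃ d ∈ D, fIFS A d '' V) ⊆ V ∧
    ∀ d ∈ D, ∀ d' ∈ D, d ≠ d' → fIFS A d '' V ∩ fIFS A d' '' V = ∅

/-- `K` is the self-affine set (attractor) for the pair `(A, D)`:
a nonempty compact set with `A K = ⋃_{d ∈ D} (K + d)`. -/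
def IsSelfAffineSet {n : ℕ} (A : Matrix (Fin n) (Fin n) ℝ) (D : Finset (Pt n))
    (K : Set (Pt n)) : Prop :=
  K.Nonempty ∧ IsCompact K ∧ mapp A '' K = ⋃ d ∈ D, (fun x => x + d) '' K

/-- The set `𝒟_M` of `M`-fold expansions `Σ_{j<M} A^j d_j`. -/
def DsetM {n : ℕ} (A : Matrix (Fin n) (Fin n) ℝ) (D : Finset (Pt n)) (M : ℕ) :
    Set (Pt n) :=
  {x | ∃ d : Fin M → Pt n, (∀ j, d j ∈ D) ∧ x = ∑ j : Fin M, mapp (A ^ (j : ℕ)) (d j)}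

/-- The set `𝒟_∞ = ⋃_{M ≥ 1} 𝒟_M`. -/
def DsetInf {n : ℕ} (A : Matrix (Fin n) (Fin n) ℝ) (D : Finset (Pt n)) : Set (Pt n) :=
  ⋃ (M : ℕ) (_ : 1 ≤ M), DsetM A D M

/-- A set is uniformly discrete if distinct points are uniformly separated. -/
def UniformlyDiscrete {n : ℕ} (S : Set (Pt n)) : Prop :=
  ∃ δ > (0 : ℝ), ∀ x ∈ S, ∀ y ∈ S, x ≠ y → δ < ‖x - y‖

/-- `σ` is the invariant (self-affine) probability measure of the IFS `{f_d}_{d ∈ D}`. -/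
def IsInvariantMeasure {n : ℕ} (A : Matrix (Fin n) (Fin n) ℝ) (D : Finset (Pt n))
    (σ : Measure (Pt n)) : Prop :=
  IsProbabilityMeasure σ ∧
  ∀ f : Pt n → ℝ, Continuous f → HasCompactSupport f →
    ∫ x, f x ∂σ = ((D.card : ℝ))⁻¹ * ∑ d ∈ D, ∫ x, f (fIFS A d x) ∂σ

/-- The measure `μ_M = Σ_{d_0,…,d_{M−1} ∈ 𝒟} δ_{d_0 + A d_1 + ⋯ + A^{M−1} d_{M−1}}`. -/
def muM {n : ℕ} (A : Matrix (Fin n) (Fin n) ℝ) (D : Finset (Pt n)) (M : ℕ) :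
    Measure (Pt n) :=
  ∑ d ∈ (Finset.univ : Finset (Fin M → {x : Pt n // x ∈ D})),
    Measure.dirac (∑ j : Fin M, mapp (A ^ (j : ℕ)) ((d j : Pt n)))

/-- Convolution of two Borel measures on `ℝⁿ`. -/
def mconv {n : ℕ} (μ ν : Measure (Pt n)) : Measure (Pt n) :=
  Measure.map (fun p : Pt n × Pt n => p.1 + p.2) (μ.prod ν)

/-- The upper `s`-density `ℰ⁺_{w,s}(ν)` of a Borel measure `ν` w.r.t. the pseudo norm `w`. -/
def upperDensity {n : ℕ} (w : Pt n → ℝ) (s : ℝ) (ν : Measure (Pt n)) : ℝ≥0∞ :=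
  ⨅ (r : ℝ) (_ : 0 < r),
    ⨆ (U : Set (Pt n)) (_ : IsCompact U) (_ : Convex ℝ U)
      (_ : ENNReal.ofReal r ≤ pdiam w U), ν U / pdiam w U ^ s

/-- The upper convex `s`-density `D^s_{w,c}(E, x)` of `E` at `x` w.r.t. `w`. -/
def upperConvexDensity {n : ℕ} (w : Pt n → ℝ) (s : ℝ) (E : Set (Pt n)) (x : Pt n) :
    ℝ≥0∞ :=
  ⨅ (r : ℝ) (_ : 0 < r),
    ⨆ (U : Set (Pt n)) (_ : Convex ℝ U) (_ : x ∈ U) (_ : 0 < pdiam w U)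
      (_ : pdiam w U ≤ ENNReal.ofReal r), Hw w s (E ∩ U) / pdiam w U ^ s

/-- The pseudo Hausdorff dimension `dim_H^w E = inf {s ≥ 0 : ℋ^s_w(E) = 0}`. -/
def dimHw {n : ℕ} (w : Pt n → ℝ) (E : Set (Pt n)) : ℝ≥0∞ :=
  ⨅ (t : ℝ≥0) (_ : Hw w (t : ℝ) E = 0), (t : ℝ≥0∞)

/-- `𝒱` is a Vitali class for `E` w.r.t. `w`. -/
def VitaliClass {n : ℕ} (w : Pt n → ℝ) (𝒱 : Set (Set (Pt n))) (E : Set (Pt n)) : Prop :=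
  ∀ x ∈ E, ∀ δ : ℝ, 0 < δ →
    ∃ U ∈ 𝒱, x ∈ U ∧ 0 < pdiam w U ∧ pdiam w U ≤ ENNReal.ofReal δ

/-- The composite map `f_𝐢 = f_{i₁} ∘ ⋯ ∘ f_{i_m}` associated with a word of digits. -/
def fWord {n : ℕ} (A : Matrix (Fin n) (Fin n) ℝ) (i : List (Pt n)) (x : Pt n) : Pt n :=
  i.foldr (fun d y => fIFS A d y) x

/-!
Each `f_d` is a bijection scaling `w`-distances by `q^{-1/n}`, so it multiplies `ℋ^s_w` by
`q^{-s/n} = 1/#𝒟`. The pieces `f_d K` of `K = ⋃ f_d K` therefore have measures adding up to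
`ℋ^s_w(K) < ∞`; as `ℋ^s_w` is a metric outer measure, compact sets are measurable, and so
`f_a K ∩ f_b K` is null for `a ≠ b`. Two incomparable words are `p a …` and `p b …` with `a ≠ b`,
whence `K_𝐢 ∩ K_𝐣 ⊆ f_p(f_a K ∩ f_b K)` is null. If instead `𝐣` extends `𝐢`, then
`K_𝐢 ∩ K_𝐣 = K_𝐣` has measure `#𝒟^{-|𝐣|} ℋ^s_w(K) > 0`. Finiteness of `ℋ^s_w(K)` forces `s > 0`,
because `ℋ^s_w ≡ ∞` for `s ≤ 0`.
-/

lemma MeasureTheory.measure_inter_eq_zero_of_sum_le {α ι : Type*} [MeasurableSpace α]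
    {μ : Measure α} {t : Finset ι} {E : ι → Set α}
    (hsum : ∑ i ∈ t, μ (E i) ≤ μ (⋃ i ∈ t, E i)) (hfin : μ (⋃ i ∈ t, E i) ≠ ⊤)
    {a b : ι} (ha : a ∈ t) (hb : b ∈ t) (hab : a ≠ b) (hEb : MeasurableSet (E b)) :
    μ (E a ∩ E b) = 0 := by
  classical
  set rest := (t.erase a).erase b
  have hsplit : ∑ i ∈ t, μ (E i) = μ (E a) + μ (E b) + ∑ i ∈ rest, μ (E i) := by
    rw [← Finset.add_sum_erase _ _ ha,
      ← Finset.add_sum_erase _ _ (Finset.mem_erase.2 ⟨hab.symm, hb⟩), add_assoc]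
  have hcover : ⋃ i ∈ t, E i ⊆ (E a ∪ E b) ∪ ⋃ i ∈ rest, E i := by
    refine iUnion₂_subset fun i hi => ?_
    by_cases hia : i = a
    · exact hia ▸ subset_union_left.trans subset_union_left
    by_cases hib : i = b
    · exact hib ▸ subset_union_right.trans subset_union_left
    exact (subset_biUnion_of_mem (u := E) (by simp [rest, hi, hia, hib])).trans subset_union_right
  have hrest : ∑ i ∈ rest, μ (E i) ≠ ⊤ :=
    ne_top_of_le_ne_top hfin ((hsplit ▸ le_add_self).trans hsum)
  have hunion : μ (E a ∪ E b) ≠ ⊤ :=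
    ne_top_of_le_ne_top hfin (measure_mono (union_subset (subset_biUnion_of_mem ha)
      (subset_biUnion_of_mem hb)))
  have hle : μ (E a) + μ (E b) ≤ μ (E a ∪ E b) := by
    refine (ENNReal.add_le_add_iff_right hrest).1 ?_
    calc μ (E a) + μ (E b) + ∑ i ∈ rest, μ (E i) ≤ μ (⋃ i ∈ t, E i) := hsplit ▸ hsum
      _ ≤ μ (E a ∪ E b) + μ (⋃ i ∈ rest, E i) := (measure_mono hcover).trans (measure_union_le _ _)
      _ ≤ μ (E a ∪ E b) + ∑ i ∈ rest, μ (E i) := add_le_add_right (measure_biUnion_finset_le _ _) _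
  rw [← measure_union_add_inter _ hEb] at hle
  simpa using (ENNReal.add_le_add_iff_left hunion).1 (hle.trans_eq (add_zero _).symm)

theorem List.exists_eq_append_cons_of_not_prefix {α : Type*} :
    ∀ {l₁ l₂ : List α}, ¬ l₁ <+: l₂ → ¬ l₂ <+: l₁ →
      ∃ p a b t₁ t₂, a ≠ b ∧ l₁ = p ++ a :: t₁ ∧ l₂ = p ++ b :: t₂
  | [], _, h₁, _ => absurd List.nil_prefix h₁
  | _, [], _, h₂ => absurd List.nil_prefix h₂
  | a :: t₁, b :: t₂, h₁, h₂ => by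
    by_cases hab : a = b
    · subst hab
      obtain ⟨p, c, d, u₁, u₂, hcd, rfl, rfl⟩ := exists_eq_append_cons_of_not_prefix
        (mt (List.prefix_cons_inj a).2 h₁) (mt (List.prefix_cons_inj a).2 h₂)
      exact ⟨a :: p, c, d, u₁, u₂, hcd, rfl, rfl⟩
    · exact ⟨[], a, b, t₁, t₂, hab, rfl, rfl⟩

lemma rpow_one_div_rpow_of_eq_mul_log_div_log {n N : ℕ} {q s : ℝ} (hq : 0 < q)
    (hs : s = n * Real.log N / Real.log q) (hs0 : s ≠ 0) : (q ^ (1 / n : ℝ)) ^ s = N := by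
  have hn : (n : ℝ) ≠ 0 := fun h => hs0 (by simp [hs, h])
  have hlogq : Real.log q ≠ 0 := fun h => hs0 (by simp [hs, h])
  have hN : (N : ℝ) ≠ 0 := fun h => hs0 (by simp [hs, h])
  rw [← Real.rpow_mul hq.le, Real.rpow_def_of_pos hq, hs]
  field_simp
  exact Real.exp_log (lt_of_le_of_ne (Nat.cast_nonneg N) (Ne.symm hN))

section PseudoHausdorffMeasure

variable {n : ℕ} (w : Pt n → ℝ)

lemma pdiam_empty : pdiam w ∅ = 0 := by simp [pdiam]

lemma ofReal_le_pdiam {E : Set (Pt n)} {x y : Pt n} (hx : x ∈ E) (hy : y ∈ E) :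
    ENNReal.ofReal (w (x - y)) ≤ pdiam w E :=
  le_iSup₂_of_le x hx (le_iSup₂ (f := fun y (_ : y ∈ E) => ENNReal.ofReal (w (x - y))) y hy)

lemma pdiam_image {T : Pt n → Pt n} {t : ℝ} (ht : 0 ≤ t)
    (hT : ∀ x y, w (T x - T y) = t * w (x - y)) (U : Set (Pt n)) :
    pdiam w (T '' U) = ENNReal.ofReal t * pdiam w U := by
  simp only [pdiam, iSup_image, ENNReal.mul_iSup, hT, ENNReal.ofReal_mul ht]

lemma preHw_mono (s δ : ℝ) : Monotone (preHw w s δ) := fun _ _ hEF =>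
  le_iInf₂ fun U hU => iInf₂_le U (hEF.trans hU)

lemma Hw_mono (s : ℝ) : Monotone (Hw w s) := fun _ _ hEF =>
  iSup₂_mono fun δ _ => preHw_mono w s δ hEF

lemma preHw_antitone (s : ℝ) (E : Set (Pt n)) : Antitone fun δ => preHw w s δ E :=
  fun _ _ h => le_iInf₂ fun U hU => le_iInf fun hc =>
    iInf₂_le_of_le U hU (iInf_le_of_le (fun i => (hc i).trans (ENNReal.ofReal_le_ofReal h)) le_rfl)

lemma Hw_eq_top_of_nonpos {s : ℝ} (hs : s ≤ 0) (E : Set (Pt n)) : Hw w s E = ⊤ := by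
  have hcost : ∀ U : Set (Pt n), pdiam w U ≤ 1 → 1 ≤ pdiam w U ^ s := fun U hU => by
    rw [← neg_neg s, ENNReal.rpow_neg, ← ENNReal.inv_rpow]
    simpa using ENNReal.rpow_le_rpow (ENNReal.one_le_inv.2 hU) (neg_nonneg.2 hs)
  have hpre : preHw w s 1 E = ⊤ := by
    refine eq_top_iff.2 (le_iInf₂ fun U _ => le_iInf fun hU => ?_)
    rw [← ENNReal.tsum_const_eq_top_of_ne_zero (α := ℕ) one_ne_zero]
    exact ENNReal.tsum_le_tsum fun i => hcost _ (by simpa using hU i)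
  exact eq_top_iff.2 (hpre ▸ le_iSup₂ (f := fun δ (_ : (0 : ℝ) < δ) => preHw w s δ E) 1 one_pos)

/-- Charging `⊤` for sets of `w`-diameter `> δ` turns `preHw w s δ` into
`OuterMeasure.ofFunction (preHwCost w s δ)`. -/
def preHwCost (s δ : ℝ) (U : Set (Pt n)) : ℝ≥0∞ :=
  if pdiam w U ≤ ENNReal.ofReal δ then pdiam w U ^ s else ⊤

def preHwOuter {s : ℝ} (hs : 0 < s) (δ : ℝ) : OuterMeasure (Pt n) :=
  OuterMeasure.ofFunction (preHwCost w s δ) <| by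
    simp [preHwCost, pdiam_empty, ENNReal.zero_rpow_of_pos hs]

lemma preHwOuter_apply {s : ℝ} (hs : 0 < s) (δ : ℝ) (E : Set (Pt n)) :
    preHwOuter w hs δ E = preHw w s δ E := by
  rw [preHwOuter, OuterMeasure.ofFunction_apply, preHw]
  refine le_antisymm (le_iInf₂ fun U hU => le_iInf fun hc => ?_) (le_iInf₂ fun U hU => ?_)
  · exact iInf₂_le_of_le U hU (le_of_eq (tsum_congr fun i => if_pos (hc i)))
  · by_cases hc : ∀ i, pdiam w (U i) ≤ ENNReal.ofReal δ
    · exact iInf₂_le_of_le U hU (iInf_le_of_le hc (tsum_congr fun i => (if_pos (hc i)).symm).le)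
    · obtain ⟨i, hi⟩ := not_forall.1 hc
      calc _ ≤ ⊤ := le_top
        _ = preHwCost w s δ (U i) := (if_neg hi).symm
        _ ≤ ∑' i, preHwCost w s δ (U i) := ENNReal.le_tsum i

def HwOuter {s : ℝ} (hs : 0 < s) : OuterMeasure (Pt n) :=
  ⨆ (δ : ℝ) (_ : 0 < δ), preHwOuter w hs δ

lemma HwOuter_apply {s : ℝ} (hs : 0 < s) (E : Set (Pt n)) : HwOuter w hs E = Hw w s E := by
  simp only [HwOuter, OuterMeasure.iSup_apply, preHwOuter_apply, Hw]

lemma exists_pos_le_norm_sub_of_areSeparated {S T : Set (Pt n)} (h : Metric.AreSeparated S T) :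
    ∃ ρ > 0, ∀ x ∈ S, ∀ y ∈ T, ρ ≤ ‖x - y‖ := by
  obtain ⟨r, hr0, hr⟩ := h
  have hr1 : min r 1 ≠ ⊤ := ne_top_of_le_ne_top one_ne_top (min_le_right _ _)
  refine ⟨(min r 1).toReal, ENNReal.toReal_pos (by simp [hr0]) hr1, fun x hx y hy => ?_⟩
  rw [← dist_eq_norm, ← ENNReal.ofReal_le_ofReal_iff dist_nonneg, ← edist_dist,
    ENNReal.ofReal_toReal hr1]
  exact (min_le_left _ _).trans (hr x hx y hy)

/-- A set of small `w`-diameter cannot meet two separated sets. -/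
lemma HwOuter_isMetric {s : ℝ} (hs : 0 < s)
    (hw : ∀ r > 0, ∃ c > 0, ∀ z : Pt n, r ≤ ‖z‖ → c ≤ w z) : (HwOuter w hs).IsMetric := by
  intro S T hST
  refine le_antisymm (measure_union_le _ _) ?_
  obtain ⟨ρ, hρ, hsep⟩ := exists_pos_le_norm_sub_of_areSeparated hST
  obtain ⟨c, hc, hcw⟩ := hw ρ hρ
  have hadd : ∀ δ < c, preHwOuter w hs δ (S ∪ T) = preHwOuter w hs δ S + preHwOuter w hs δ T :=
    fun δ hδ => OuterMeasure.ofFunction_union_of_top_of_nonempty_inter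
      fun u ⟨x, hxS, hxu⟩ ⟨y, hyT, hyu⟩ => if_neg fun hle => absurd
        ((ofReal_le_pdiam w hxu hyu).trans hle)
        (not_le.2 (ENNReal.ofReal_lt_ofReal_iff'.2 ⟨hδ.trans_le (hcw _ (hsep x hxS y hyT)),
          hc.trans_le (hcw _ (hsep x hxS y hyT))⟩))
  simp only [HwOuter, OuterMeasure.iSup_apply]
  refine ENNReal.biSup_add_biSup_le' ⟨1, one_pos⟩ ⟨1, one_pos⟩ fun δ₁ h₁ δ₂ h₂ => ?_
  set δ := min (min δ₁ δ₂) (c / 2)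
  have hδ : 0 < δ := by positivity
  have hanti : ∀ E, ∀ δ' ≥ δ, preHwOuter w hs δ' E ≤ preHwOuter w hs δ E := fun E δ' h => by
    simp only [preHwOuter_apply]
    exact preHw_antitone w s E h
  calc preHwOuter w hs δ₁ S + preHwOuter w hs δ₂ T
      ≤ preHwOuter w hs δ S + preHwOuter w hs δ T :=
        add_le_add (hanti S δ₁ ((min_le_left _ _).trans (min_le_left _ _)))
          (hanti T δ₂ ((min_le_left _ _).trans (min_le_right _ _)))
    _ = preHwOuter w hs δ (S ∪ T) := (hadd δ ((min_le_right _ _).trans_lt (by linarith))).symm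
    _ ≤ ⨆ (δ : ℝ) (_ : 0 < δ), preHwOuter w hs δ (S ∪ T) :=
        le_iSup₂ (f := fun δ (_ : 0 < δ) => preHwOuter w hs δ (S ∪ T)) δ hδ

lemma Hw_inter_eq_zero_of_sum_le {s : ℝ} (hs : 0 < s)
    (hw : ∀ r > 0, ∃ c > 0, ∀ z : Pt n, r ≤ ‖z‖ → c ≤ w z) {ι : Type*} {t : Finset ι}
    {E : ι → Set (Pt n)} (hE : ∀ i ∈ t, MeasurableSet (E i))
    (hsum : ∑ i ∈ t, Hw w s (E i) ≤ Hw w s (⋃ i ∈ t, E i)) (hfin : Hw w s (⋃ i ∈ t, E i) ≠ ⊤)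
    {a b : ι} (ha : a ∈ t) (hb : b ∈ t) (hab : a ≠ b) : Hw w s (E a ∩ E b) = 0 := by
  let μ := (HwOuter w hs).toMeasure (HwOuter_isMetric w hs hw).le_caratheodory
  have hμ : ∀ F, MeasurableSet F → μ F = Hw w s F := fun F hF => by
    rw [toMeasure_apply _ _ hF, HwOuter_apply]
  have hU : MeasurableSet (⋃ i ∈ t, E i) := Finset.measurableSet_biUnion t hE
  rw [← hμ _ ((hE a ha).inter (hE b hb))]
  rw [← hμ _ hU, ← Finset.sum_congr rfl fun i hi => hμ _ (hE i hi)] at hsum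
  exact measure_inter_eq_zero_of_sum_le hsum (hμ _ hU ▸ hfin) ha hb hab (hE b hb)

lemma preHw_image_le (s : ℝ) {T : Pt n → Pt n} {t : ℝ} (ht : 0 < t)
    (hT : ∀ x y, w (T x - T y) = t * w (x - y)) (δ : ℝ) (E : Set (Pt n)) :
    preHw w s (t * δ) (T '' E) ≤ ENNReal.ofReal t ^ s * preHw w s δ E := by
  have ht0 : ENNReal.ofReal t ≠ 0 := (ENNReal.ofReal_pos.2 ht).ne'
  simp only [preHw, ENNReal.mul_iInf_of_ne (ENNReal.rpow_pos (ENNReal.ofReal_pos.2 ht)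
    ENNReal.ofReal_ne_top).ne' (ENNReal.rpow_ne_top_of_ne_zero ht0 ENNReal.ofReal_ne_top)]
  refine le_iInf₂ fun U hU => le_iInf fun hc => ?_
  have hdiam : ∀ i, pdiam w (T '' U i) = ENNReal.ofReal t * pdiam w (U i) :=
    fun i => pdiam_image w ht.le hT (U i)
  refine iInf₂_le_of_le (fun i => T '' U i) (by rw [← image_iUnion]; exact image_mono hU)
    (iInf_le_of_le (fun i => ?_) (le_of_eq ?_))
  · rw [hdiam, ENNReal.ofReal_mul ht.le]
    exact mul_le_mul_right (hc i) _
  · rw [← ENNReal.tsum_mul_left]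
    refine tsum_congr fun i => ?_
    rw [hdiam, ENNReal.mul_rpow_of_ne_top ENNReal.ofReal_ne_top
      (ne_top_of_le_ne_top ENNReal.ofReal_ne_top (hc i))]

lemma Hw_image_le (s : ℝ) {T : Pt n → Pt n} {t : ℝ} (ht : 0 < t)
    (hT : ∀ x y, w (T x - T y) = t * w (x - y)) (E : Set (Pt n)) :
    Hw w s (T '' E) ≤ ENNReal.ofReal t ^ s * Hw w s E := by
  refine iSup₂_le fun δ hδ => ?_
  calc preHw w s δ (T '' E) = preHw w s (t * (δ / t)) (T '' E) := by rw [mul_div_cancel₀ _ ht.ne']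
    _ ≤ ENNReal.ofReal t ^ s * preHw w s (δ / t) E := preHw_image_le w s ht hT _ E
    _ ≤ ENNReal.ofReal t ^ s * Hw w s E := mul_le_mul_right (le_iSup₂
        (f := fun δ (_ : (0 : ℝ) < δ) => preHw w s δ E) (δ / t) (div_pos hδ ht)) _

lemma Hw_image_equiv (s : ℝ) (e : Pt n ≃ Pt n) {t : ℝ} (ht : 0 < t)
    (he : ∀ x y, w (e x - e y) = t * w (x - y)) (E : Set (Pt n)) :
    Hw w s (e '' E) = ENNReal.ofReal t ^ s * Hw w s E := by
  have he_symm : ∀ x y, w (e.symm x - e.symm y) = t⁻¹ * w (x - y) := fun x y => by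
    rw [← e.apply_symm_apply x, ← e.apply_symm_apply y, he, e.symm_apply_apply,
      e.symm_apply_apply, inv_mul_cancel_left₀ ht.ne']
  have hback := Hw_image_le w s (inv_pos.2 ht) he_symm (e '' E)
  rw [e.symm_image_image] at hback
  have hone : ENNReal.ofReal t ^ s * ENNReal.ofReal t⁻¹ ^ s = 1 := by
    rw [← ENNReal.mul_rpow_of_ne_top ENNReal.ofReal_ne_top ENNReal.ofReal_ne_top,
      ← ENNReal.ofReal_mul ht.le, mul_inv_cancel₀ ht.ne', ENNReal.ofReal_one, ENNReal.one_rpow]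
  refine le_antisymm (Hw_image_le w s ht he E) ?_
  calc ENNReal.ofReal t ^ s * Hw w s E
      ≤ ENNReal.ofReal t ^ s * (ENNReal.ofReal t⁻¹ ^ s * Hw w s (e '' E)) :=
        mul_le_mul_right hback _
    _ = Hw w s (e '' E) := by rw [← mul_assoc, hone, one_mul]

end PseudoHausdorffMeasure

section SelfAffine

variable {n : ℕ} {A : Matrix (Fin n) (Fin n) ℝ}

lemma mapp_mul (A B : Matrix (Fin n) (Fin n) ℝ) (x : Pt n) :
    mapp (A * B) x = mapp A (mapp B x) := by
  simp [mapp]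

lemma mapp_inv_mapp (hA : A.det ≠ 0) (x : Pt n) : mapp A⁻¹ (mapp A x) = x := by
  rw [← mapp_mul, Matrix.nonsing_inv_mul A (isUnit_iff_ne_zero.2 hA)]
  simp [mapp]

lemma mapp_mapp_inv (hA : A.det ≠ 0) (x : Pt n) : mapp A (mapp A⁻¹ x) = x := by
  rw [← mapp_mul, Matrix.mul_nonsing_inv A (isUnit_iff_ne_zero.2 hA)]
  simp [mapp]

lemma continuous_mapp (A : Matrix (Fin n) (Fin n) ℝ) : Continuous (mapp A) :=
  (Matrix.toEuclideanLin A).continuous_of_finiteDimensional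

lemma continuous_fIFS (A : Matrix (Fin n) (Fin n) ℝ) (d : Pt n) : Continuous (fIFS A d) :=
  (continuous_mapp A⁻¹).comp (continuous_add_const d)

lemma fIFS_sub_fIFS (d x y : Pt n) : fIFS A d x - fIFS A d y = mapp A⁻¹ (x - y) := by
  rw [fIFS, fIFS, mapp, mapp, mapp, ← map_sub, add_sub_add_right_eq_sub]

def fIFSEquiv (hA : A.det ≠ 0) (d : Pt n) : Pt n ≃ Pt n where
  toFun := fIFS A d
  invFun y := mapp A y - d
  left_inv x := by simp [fIFS, mapp_mapp_inv hA]
  right_inv y := by simp [fIFS, mapp_inv_mapp hA]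

lemma image_fWord_nil (E : Set (Pt n)) : fWord A [] '' E = E :=
  image_id E

lemma image_fWord_cons (d : Pt n) (l : List (Pt n)) (E : Set (Pt n)) :
    fWord A (d :: l) '' E = fIFS A d '' (fWord A l '' E) := by
  rw [image_image]
  rfl

lemma image_fWord_append (l₁ l₂ : List (Pt n)) (E : Set (Pt n)) :
    fWord A (l₁ ++ l₂) '' E = fWord A l₁ '' (fWord A l₂ '' E) := by
  rw [image_image]
  exact congrArg (· '' E) (funext fun x => List.foldr_append ..)

lemma injective_fWord (hA : A.det ≠ 0) : ∀ l : List (Pt n), Function.Injective (fWord A l)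
  | [] => Function.injective_id
  | d :: l => (fIFSEquiv hA d).injective.comp (injective_fWord hA l)

lemma det_ne_zero_of_eq_mul_log_div_log {N : ℕ} {s : ℝ}
    (hs : s = n * Real.log N / Real.log |A.det|) (hs0 : s ≠ 0) : A.det ≠ 0 :=
  fun h => hs0 (by simp [hs, h])

end SelfAffine

namespace IsPseudoNorm

variable {n : ℕ} {A : Matrix (Fin n) (Fin n) ℝ} {w : Pt n → ℝ}

lemma exists_pos_le_of_le_norm (hw : IsPseudoNorm A w) :
    ∀ r > 0, ∃ c > 0, ∀ z : Pt n, r ≤ ‖z‖ → c ≤ w z := by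
  obtain ⟨C, hC, α₁, hα₁, α₂, hα₂, hfar, hnear⟩ := hw.comparable
  intro r hr
  refine ⟨C⁻¹ * min r 1 ^ α₂, by positivity, fun z hz => ?_⟩
  have hm : 0 ≤ min r 1 := le_min hr.le zero_le_one
  rcases le_or_gt ‖z‖ 1 with h | h
  · refine le_trans ?_ (hnear z h).1
    gcongr
    exact (min_le_left _ _).trans hz
  · refine le_trans ?_ (hfar z h).1
    gcongr
    calc min r 1 ^ α₂ ≤ 1 := Real.rpow_le_one hm (min_le_right _ _) hα₂.le
      _ ≤ ‖z‖ ^ α₁ := Real.one_le_rpow h.le hα₁.le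

lemma apply_mapp_inv (hw : IsPseudoNorm A w) (hA : A.det ≠ 0) (z : Pt n) :
    w (mapp A⁻¹ z) = (|A.det| ^ (1 / n : ℝ))⁻¹ * w z := by
  have hc : |A.det| ^ (1 / n : ℝ) ≠ 0 := (Real.rpow_pos_of_pos (abs_pos.2 hA) _).ne'
  rw [eq_inv_mul_iff_mul_eq₀ hc, ← hw.scaling, mapp_mapp_inv hA]

lemma Hw_image_fIFS (hw : IsPseudoNorm A w) {N : ℕ} {s : ℝ}
    (hs : s = n * Real.log N / Real.log |A.det|) (hs0 : s ≠ 0) (d : Pt n) (E : Set (Pt n)) :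
    Hw w s (fIFS A d '' E) = (N : ℝ≥0∞)⁻¹ * Hw w s E := by
  have hA := det_ne_zero_of_eq_mul_log_div_log hs hs0
  have hq : 0 < |A.det| := abs_pos.2 hA
  have hc : 0 < |A.det| ^ (1 / n : ℝ) := Real.rpow_pos_of_pos hq _
  have hN : (0 : ℝ) < N := Nat.cast_pos.2 (Nat.pos_of_ne_zero fun h => hs0 (by simp [hs, h]))
  have he : ⇑(fIFSEquiv hA d) = fIFS A d := rfl
  rw [← he, Hw_image_equiv w s (fIFSEquiv hA d) (inv_pos.2 hc)
      (fun x y => by rw [he, fIFS_sub_fIFS, hw.apply_mapp_inv hA]),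
    ENNReal.ofReal_rpow_of_pos (inv_pos.2 hc), Real.inv_rpow hc.le,
    rpow_one_div_rpow_of_eq_mul_log_div_log hq hs hs0, ENNReal.ofReal_inv_of_pos hN,
    ENNReal.ofReal_natCast]

lemma Hw_image_fWord (hw : IsPseudoNorm A w) {N : ℕ} {s : ℝ}
    (hs : s = n * Real.log N / Real.log |A.det|) (hs0 : s ≠ 0) (l : List (Pt n))
    (E : Set (Pt n)) : Hw w s (fWord A l '' E) = (N : ℝ≥0∞)⁻¹ ^ l.length * Hw w s E := by
  induction l with
  | nil => rw [image_fWord_nil, List.length_nil, pow_zero, one_mul]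
  | cons d l ih =>
    rw [image_fWord_cons, hw.Hw_image_fIFS hs hs0, ih, List.length_cons, pow_succ', mul_assoc]

end IsPseudoNorm

namespace IsSelfAffineSet

variable {n : ℕ} {A : Matrix (Fin n) (Fin n) ℝ} {D : Finset (Pt n)} {K : Set (Pt n)}

lemma biUnion_image_fIFS (hK : IsSelfAffineSet A D K) (hA : A.det ≠ 0) :
    ⋃ d ∈ D, fIFS A d '' K = K := by
  calc ⋃ d ∈ D, fIFS A d '' K = mapp A⁻¹ '' ⋃ d ∈ D, (fun x => x + d) '' K := by
        simp only [image_iUnion₂, image_image]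
        rfl
    _ = K := by
        rw [← hK.2.2, image_image]
        simp [mapp_inv_mapp hA]

lemma image_fWord_subset (hK : IsSelfAffineSet A D K) (hA : A.det ≠ 0) :
    ∀ {l : List (Pt n)}, (∀ d ∈ l, d ∈ D) → fWord A l '' K ⊆ K
  | [], _ => (image_fWord_nil K).subset
  | d :: l, hl => by
    rw [image_fWord_cons]
    calc fIFS A d '' (fWord A l '' K) ⊆ fIFS A d '' K :=
          image_mono (image_fWord_subset hK hA fun x hx => hl x (List.mem_cons_of_mem d hx))
      _ ⊆ K := (subset_biUnion_of_mem (u := fun d => fIFS A d '' K)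
          (hl d List.mem_cons_self)).trans (hK.biUnion_image_fIFS hA).subset

lemma image_fWord_append_subset (hK : IsSelfAffineSet A D K) (hA : A.det ≠ 0) (p : List (Pt n))
    {t : List (Pt n)} (ht : ∀ d ∈ t, d ∈ D) : fWord A (p ++ t) '' K ⊆ fWord A p '' K := by
  rw [image_fWord_append]
  exact image_mono (hK.image_fWord_subset hA ht)

lemma image_fWord_append_cons_subset (hK : IsSelfAffineSet A D K) (hA : A.det ≠ 0)
    (p : List (Pt n)) (c : Pt n) {t : List (Pt n)} (ht : ∀ d ∈ t, d ∈ D) :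
    fWord A (p ++ c :: t) '' K ⊆ fWord A p '' (fIFS A c '' K) := by
  rw [image_fWord_append, image_fWord_cons]
  exact image_mono (image_mono (hK.image_fWord_subset hA ht))

lemma Hw_inter_image_fIFS_eq_zero (hK : IsSelfAffineSet A D K) {w : Pt n → ℝ} {s : ℝ}
    (hw : IsPseudoNorm A w) (hs : s = n * Real.log D.card / Real.log |A.det|) (hs0 : 0 < s)
    (hfin : Hw w s K ≠ ⊤) {a b : Pt n} (ha : a ∈ D) (hb : b ∈ D) (hab : a ≠ b) :
    Hw w s (fIFS A a '' K ∩ fIFS A b '' K) = 0 := by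
  have hA := det_ne_zero_of_eq_mul_log_div_log hs hs0.ne'
  have hunion := hK.biUnion_image_fIFS hA
  refine Hw_inter_eq_zero_of_sum_le w hs0 hw.exists_pos_le_of_le_norm (t := D)
    (E := fun d => fIFS A d '' K)
    (fun d _ => (hK.2.1.image (continuous_fIFS A d)).isClosed.measurableSet) ?_
    (by rwa [hunion]) ha hb hab
  simp only [hw.Hw_image_fIFS hs hs0.ne', Finset.sum_const, nsmul_eq_mul, hunion, ← mul_assoc]
  exact mul_le_of_le_one_left (by positivity) (ENNReal.mul_inv_le_one _)

end IsSelfAffineSet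

theorem stmt7_general {n : ℕ} (A : Matrix (Fin n) (Fin n) ℝ)
    (w : Pt n → ℝ) (hw : IsPseudoNorm A w)
    (D : Finset (Pt n))
    (K : Set (Pt n)) (hK : IsSelfAffineSet A D K)
    (s : ℝ) (hs : s = n * Real.log D.card / Real.log |A.det|)
    (hpos : 0 < Hw w s K) (hfin : Hw w s K < ⊤)
    (i j : List (Pt n)) (hi : ∀ d ∈ i, d ∈ D) (hj : ∀ d ∈ j, d ∈ D) :
    ((¬ i <+: j) ∧ (¬ j <+: i)) ↔ Hw w s (fWord A i '' K ∩ fWord A j '' K) = 0 := by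
  have hs0 : 0 < s := lt_of_not_ge fun h => hfin.ne (Hw_eq_top_of_nonpos w h K)
  have hA := det_ne_zero_of_eq_mul_log_div_log hs hs0.ne'
  have hword := hw.Hw_image_fWord hs hs0.ne'
  constructor
  · rintro ⟨hij, hji⟩
    obtain ⟨p, a, b, t₁, t₂, hab, rfl, rfl⟩ := List.exists_eq_append_cons_of_not_prefix hij hji
    have hsub : fWord A (p ++ a :: t₁) '' K ∩ fWord A (p ++ b :: t₂) '' K ⊆
        fWord A p '' (fIFS A a '' K ∩ fIFS A b '' K) := by
      rw [image_inter (injective_fWord hA p)]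
      exact inter_subset_inter
        (hK.image_fWord_append_cons_subset hA p a fun d hd => hi d (by simp [hd]))
        (hK.image_fWord_append_cons_subset hA p b fun d hd => hj d (by simp [hd]))
    have hnull := hK.Hw_inter_image_fIFS_eq_zero hw hs hs0 hfin.ne (hi a (by simp))
      (hj b (by simp)) hab
    exact nonpos_iff_eq_zero.1 ((Hw_mono w s hsub).trans_eq (by rw [hword, hnull, mul_zero]))
  · intro h0
    have hprefix : ∀ {u v : List (Pt n)}, u <+: v → (∀ d ∈ v, d ∈ D) →
        Hw w s (fWord A u '' K ∩ fWord A v '' K) ≠ 0 := by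
      rintro u _ ⟨t, rfl⟩ hv
      rw [inter_eq_right.2 (hK.image_fWord_append_subset hA u
        fun d hd => hv d (List.mem_append_right u hd)), hword]
      exact mul_ne_zero (pow_ne_zero _ (ENNReal.inv_ne_zero.2 (ENNReal.natCast_ne_top _)))
        hpos.ne'
    exact ⟨fun h => hprefix h hj h0, fun h => hprefix h hi (inter_comm (α := Pt n) _ _ ▸ h0)⟩

/-- Corollary 3.0: if `0 < ℋ^s_w(K) < ∞`, two words are incomparable (neither a
prefix of the other) iff `ℋ^s_w(K_𝐢 ∩ K_𝐣) = 0`. -/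
theorem stmt7 {n : ℕ} (hn : 0 < n) (A : Matrix (Fin n) (Fin n) ℝ)
    (hA : IsExpandingMatrix A)
    (hAnorm : ∀ x : Pt n, ‖x‖ ≤ ‖mapp A x‖)
    (hAeq : ∀ x : Pt n, ‖x‖ = ‖mapp A x‖ → x = 0)
    (w : Pt n → ℝ) (hw : IsPseudoNorm A w)
    (D : Finset (Pt n)) (hD0 : (0 : Pt n) ∈ D)
    (K : Set (Pt n)) (hK : IsSelfAffineSet A D K)
    (s : ℝ) (hs : s = n * Real.log D.card / Real.log |A.det|)
    (hpos : 0 < Hw w s K) (hfin : Hw w s K < ⊤)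
    (i j : List (Pt n)) (hi : ∀ d ∈ i, d ∈ D) (hj : ∀ d ∈ j, d ∈ D) :
    ((¬ i <+: j) ∧ (¬ j <+: i)) ↔ Hw w s (fWord A i '' K ∩ fWord A j '' K) = 0 :=
  stmt7_general A w hw D K hK s hs hpos hfin i j hi hj
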